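/- arXiv:1307.0523 — 7 statements merged into one kernel-verified Lean document; each statement's English description precedes it below -/
import Mathlib

section
/- Let x, x_i, x_j, x_k, x_{ij}, x_{jk}, x_{ki} be real numbers and α_i, α_j, α_k nonzero real parameters. Suppose the three cross-ratio (Q1_{δ=0}) quad-equations adjacent to x hold: (x−x_i)(x_{ij}−x_j)/((x_i−x_{ij})(x_j−x)) = α_i/α_j, (x−x_j)(x_{jk}−x_k)/((x_j−x_{jk})(x_k−x)) = α_j/α_k, and (x−x_k)(x_{ki}−x_i)/((x_k−x_{ki})(x_i−x)) = α_k/α_i, where all appearing denominators are nonzero. Then the octahedron relation (x_{ij}−x_i)(x_{jk}−x_j)(x_{ki}−x_k) = (x_{ij}−x_j)(x_{jk}−x_k)(x_{ki}−x_i) holds. -/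
/-!
Multiplying the three quad-equations, the parameters cancel cyclically on the right, while on the
left the factors `x - x_i`, `x - x_j`, `x - x_k` cancel from the product of cross-ratios, leaving
exactly the ratio of the two sides of the octahedron relation.
-/

section CrossRatio

variable {K : Type*} [Field K]

def q1CrossRatio (x xi xij xj : K) : K :=
  (x - xi) * (xij - xj) / ((xi - xij) * (xj - x))

theorem q1CrossRatio_mul_mul_eq_div {x xi xj xk : K} (xij xjk xki : K)
    (hi : xi - x ≠ 0) (hj : xj - x ≠ 0) (hk : xk - x ≠ 0) :
    q1CrossRatio x xi xij xj * q1CrossRatio x xj xjk xk * q1CrossRatio x xk xki xi =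
      (xij - xj) * (xjk - xk) * (xki - xi) / ((xij - xi) * (xjk - xj) * (xki - xk)) := by
  -- The common factor of numerator and denominator is `(x - xi) * (x - xj) * (x - xk)`.
  have hP : -((xi - x) * (xj - x) * (xk - x)) ≠ 0 :=
    neg_ne_zero.2 (mul_ne_zero (mul_ne_zero hi hj) hk)
  unfold q1CrossRatio
  rw [div_mul_div_comm, div_mul_div_comm,
    ← mul_div_mul_right ((xij - xj) * (xjk - xk) * (xki - xi)) _ hP]
  congr 1 <;> ring

end CrossRatio

theorem stmt0 (x xi xj xk xij xjk xki ai aj ak : ℝ)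
    (hai : ai ≠ 0) (haj : aj ≠ 0) (hak : ak ≠ 0)
    (h1d : (xi - xij) * (xj - x) ≠ 0)
    (h2d : (xj - xjk) * (xk - x) ≠ 0)
    (h3d : (xk - xki) * (xi - x) ≠ 0)
    (h1 : (x - xi) * (xij - xj) / ((xi - xij) * (xj - x)) = ai / aj)
    (h2 : (x - xj) * (xjk - xk) / ((xj - xjk) * (xk - x)) = aj / ak)
    (h3 : (x - xk) * (xki - xi) / ((xk - xki) * (xi - x)) = ak / ai) :
    (xij - xi) * (xjk - xj) * (xki - xk) = (xij - xj) * (xjk - xk) * (xki - xi) := by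
  have hratio :
      (xij - xj) * (xjk - xk) * (xki - xi) / ((xij - xi) * (xjk - xj) * (xki - xk)) = 1 := by
    rw [← q1CrossRatio_mul_mul_eq_div xij xjk xki (right_ne_zero_of_mul h3d)
      (right_ne_zero_of_mul h1d) (right_ne_zero_of_mul h2d)]
    unfold q1CrossRatio
    rw [h1, h2, h3]
    field_simp
  exact (eq_of_div_eq_one hratio).symm
end

section
/- Let x, x_i, x_j, x_k, x_{ij}, x_{jk}, x_{ki} be real numbers and α_i, α_j, α_k real parameters. Suppose the three shifted cross-ratio (Q1_{δ=1}) equations adjacent to x hold: (x−x_i+α_i)(x_{ij}−x_j+α_i)/((x_i−x_{ij}−α_j)(x_j−x−α_j)) = α_i/α_j, and the two cyclic analogues obtained by the cyclic substitution (i,j,k)→(j,k,i), with all appearing denominators and parameters nonzero. Then (x_{ij}−x_i+α_j)(x_{jk}−x_j+α_k)(x_{ki}−x_k+α_i) = (x_{ij}−x_j+α_i)(x_{jk}−x_k+α_j)(x_{ki}−x_i+α_k). -/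
theorem stmt1 (x xi xj xk xij xjk xki ai aj ak : ℝ)
    (hai : ai ≠ 0) (haj : aj ≠ 0) (hak : ak ≠ 0)
    (h1d : (xi - xij - aj) * (xj - x - aj) ≠ 0)
    (h2d : (xj - xjk - ak) * (xk - x - ak) ≠ 0)
    (h3d : (xk - xki - ai) * (xi - x - ai) ≠ 0)
    (h1 : (x - xi + ai) * (xij - xj + ai) / ((xi - xij - aj) * (xj - x - aj)) = ai / aj)
    (h2 : (x - xj + aj) * (xjk - xk + aj) / ((xj - xjk - ak) * (xk - x - ak)) = aj / ak)
    (h3 : (x - xk + ak) * (xki - xi + ak) / ((xk - xki - ai) * (xi - x - ai)) = ak / ai) :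
    (xij - xi + aj) * (xjk - xj + ak) * (xki - xk + ai)
      = (xij - xj + ai) * (xjk - xk + aj) * (xki - xi + ak) := by
  have d1 : (xj - x - aj) ≠ 0 := fun h => h1d (by rw [h, mul_zero])
  have d2 : (xk - x - ak) ≠ 0 := fun h => h2d (by rw [h, mul_zero])
  have d3 : (xi - x - ai) ≠ 0 := fun h => h3d (by rw [h, mul_zero])
  rw [div_eq_div_iff h1d haj] at h1
  rw [div_eq_div_iff h2d hak] at h2
  rw [div_eq_div_iff h3d hai] at h3
  have q1 : aj * ((xi - x - ai) * (xij - xj + ai)) = ai * ((xj - x - aj) * (xij - xi + aj)) := by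
    linear_combination -h1
  have q2 : ak * ((xj - x - aj) * (xjk - xk + aj)) = aj * ((xk - x - ak) * (xjk - xj + ak)) := by
    linear_combination -h2
  have q3 : ai * ((xk - x - ak) * (xki - xi + ak)) = ak * ((xi - x - ai) * (xki - xk + ai)) := by
    linear_combination -h3
  have Q := congrArg₂ (· * ·) (congrArg₂ (· * ·) q1 q2) q3
  have hne : ai * aj * ak * ((xi - x - ai) * (xj - x - aj) * (xk - x - ak)) ≠ 0 :=
    mul_ne_zero (mul_ne_zero (mul_ne_zero hai haj) hak)
      (mul_ne_zero (mul_ne_zero d3 d1) d2)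
  apply mul_left_cancel₀ hne
  linear_combination -Q
end

section
/- Let x, x_i, x_j, x_k, x_{ij}, x_{jk}, x_{ki} be real numbers and α_i, α_j, α_k real parameters. Suppose the three discrete KdV (H1) equations adjacent to x hold: (x−x_{ij})(x_i−x_j) = α_i−α_j, (x−x_{jk})(x_j−x_k) = α_j−α_k, and (x−x_{ki})(x_k−x_i) = α_k−α_i. Then x_{ij}(x_i−x_j) + x_{jk}(x_j−x_k) + x_{ki}(x_k−x_i) = 0. -/
theorem stmt2 (x xi xj xk xij xjk xki ai aj ak : ℝ)
    (h1 : (x - xij) * (xi - xj) = ai - aj)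
    (h2 : (x - xjk) * (xj - xk) = aj - ak)
    (h3 : (x - xki) * (xk - xi) = ak - ai) :
    xij * (xi - xj) + xjk * (xj - xk) + xki * (xk - xi) = 0 := by
  -- In the sum of the three equations the parameters and the coefficient of `x` telescope to zero.
  linear_combination -h1 - h2 - h3
end

section
/- Let x, x_i, x_j, x_k, x_{ij}, x_{jk}, x_{ki} be real numbers and α_i, α_j, α_k real parameters. Suppose the three Q3_{δ=0} (hyperbolic shifted cross-ratio) equations adjacent to x hold: sinh(x−x_i+α_i)·sinh(x_{ij}−x_j+α_i)/(sinh(x_i−x_{ij}−α_j)·sinh(x_j−x−α_j)) = sinh(2α_i)/sinh(2α_j), together with the two cyclic analogues under (i,j,k)→(j,k,i), where all appearing sinh-denominators and sinh(2α)-values are nonzero. Then sinh(x_{ij}−x_i+α_j)·sinh(x_{jk}−x_j+α_k)·sinh(x_{ki}−x_k+α_i) = sinh(x_{ij}−x_j+α_i)·sinh(x_{jk}−x_k+α_j)·sinh(x_{ki}−x_i+α_k). -/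
/-! Multiply the three Q3 equations: the ratios `sinh (2α_i) / sinh (2α_j)` telescope to `1`, and
since `sinh` is odd, each factor `sinh (x_j - x - α_j)` in a denominator is minus a factor
`sinh (x - x_j + α_j)` in the next numerator, so all terms at the vertex `x` cancel. -/

theorem neg_mul_neg_mul_neg_eq_of_div_eq_div {K : Type*} [Field K]
    {p₁ p₂ p₃ q₁ q₂ q₃ r₁ r₂ r₃ s₁ s₂ s₃ : K} (hs₁ : s₁ ≠ 0) (hs₂ : s₂ ≠ 0) (hs₃ : s₃ ≠ 0)
    (e₁ : p₁ * q₁ / (r₁ * -p₂) = s₁ / s₂) (e₂ : p₂ * q₂ / (r₂ * -p₃) = s₂ / s₃)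
    (e₃ : p₃ * q₃ / (r₃ * -p₁) = s₃ / s₁) :
    -r₁ * -r₂ * -r₃ = q₁ * q₂ * q₃ := by
  have h₁ : p₁ * q₁ / (r₁ * -p₂) ≠ 0 := e₁ ▸ div_ne_zero hs₁ hs₂
  have h₂ : p₂ * q₂ / (r₂ * -p₃) ≠ 0 := e₂ ▸ div_ne_zero hs₂ hs₃
  have h₃ : p₃ * q₃ / (r₃ * -p₁) ≠ 0 := e₃ ▸ div_ne_zero hs₃ hs₁
  simp only [div_ne_zero_iff, mul_ne_zero_iff, neg_ne_zero] at h₁ h₂ h₃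
  obtain ⟨⟨hp₁, -⟩, hr₁, hp₂⟩ := h₁
  obtain ⟨-, hr₂, hp₃⟩ := h₂
  obtain ⟨-, hr₃, -⟩ := h₃
  have hprod : p₁ * q₁ / (r₁ * -p₂) * (p₂ * q₂ / (r₂ * -p₃)) * (p₃ * q₃ / (r₃ * -p₁)) = 1 := by
    rw [e₁, e₂, e₃]; field_simp
  field_simp at hprod
  linear_combination hprod

theorem Real.sinh_sub_sub_eq_neg (u v a : ℝ) : Real.sinh (u - v - a) = -Real.sinh (v - u + a) := by
  rw [← Real.sinh_neg]; ring_nf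

theorem stmt5_general (x xi xj xk xij xjk xki ai aj ak : ℝ)
    (hai : Real.sinh (2 * ai) ≠ 0) (haj : Real.sinh (2 * aj) ≠ 0)
    (hak : Real.sinh (2 * ak) ≠ 0)
    (h1 : Real.sinh (x - xi + ai) * Real.sinh (xij - xj + ai)
        / (Real.sinh (xi - xij - aj) * Real.sinh (xj - x - aj))
        = Real.sinh (2 * ai) / Real.sinh (2 * aj))
    (h2 : Real.sinh (x - xj + aj) * Real.sinh (xjk - xk + aj)
        / (Real.sinh (xj - xjk - ak) * Real.sinh (xk - x - ak))
        = Real.sinh (2 * aj) / Real.sinh (2 * ak))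
    (h3 : Real.sinh (x - xk + ak) * Real.sinh (xki - xi + ak)
        / (Real.sinh (xk - xki - ai) * Real.sinh (xi - x - ai))
        = Real.sinh (2 * ak) / Real.sinh (2 * ai)) :
    Real.sinh (xij - xi + aj) * Real.sinh (xjk - xj + ak) * Real.sinh (xki - xk + ai)
      = Real.sinh (xij - xj + ai) * Real.sinh (xjk - xk + aj) * Real.sinh (xki - xi + ak) := by
  rw [Real.sinh_sub_sub_eq_neg xj] at h1
  rw [Real.sinh_sub_sub_eq_neg xk] at h2
  rw [Real.sinh_sub_sub_eq_neg xi] at h3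
  rw [← neg_neg (Real.sinh (xij - xi + aj)), ← neg_neg (Real.sinh (xjk - xj + ak)),
    ← neg_neg (Real.sinh (xki - xk + ai)), ← Real.sinh_sub_sub_eq_neg,
    ← Real.sinh_sub_sub_eq_neg, ← Real.sinh_sub_sub_eq_neg]
  exact neg_mul_neg_mul_neg_eq_of_div_eq_div hai haj hak h1 h2 h3

theorem stmt5 (x xi xj xk xij xjk xki ai aj ak : ℝ)
    (hai : Real.sinh (2 * ai) ≠ 0) (haj : Real.sinh (2 * aj) ≠ 0)
    (hak : Real.sinh (2 * ak) ≠ 0)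
    (h1d : Real.sinh (xi - xij - aj) * Real.sinh (xj - x - aj) ≠ 0)
    (h2d : Real.sinh (xj - xjk - ak) * Real.sinh (xk - x - ak) ≠ 0)
    (h3d : Real.sinh (xk - xki - ai) * Real.sinh (xi - x - ai) ≠ 0)
    (h1 : Real.sinh (x - xi + ai) * Real.sinh (xij - xj + ai)
        / (Real.sinh (xi - xij - aj) * Real.sinh (xj - x - aj))
        = Real.sinh (2 * ai) / Real.sinh (2 * aj))
    (h2 : Real.sinh (x - xj + aj) * Real.sinh (xjk - xk + aj)
        / (Real.sinh (xj - xjk - ak) * Real.sinh (xk - x - ak))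
        = Real.sinh (2 * aj) / Real.sinh (2 * ak))
    (h3 : Real.sinh (x - xk + ak) * Real.sinh (xki - xi + ak)
        / (Real.sinh (xk - xki - ai) * Real.sinh (xi - x - ai))
        = Real.sinh (2 * ak) / Real.sinh (2 * ai)) :
    Real.sinh (xij - xi + aj) * Real.sinh (xjk - xj + ak) * Real.sinh (xki - xk + ai)
      = Real.sinh (xij - xj + ai) * Real.sinh (xjk - xk + aj) * Real.sinh (xki - xi + ak) :=
  stmt5_general x xi xj xk xij xjk xki ai aj ak hai haj hak h1 h2 h3
end

section
/- Let x_i, x_j, x_k, x_{ij}, x_{jk}, x_{ik} be real numbers and α_i, α_j, α_k real parameters, with all differences appearing in denominators below nonzero. Suppose the corner equation (E_i): α_j/(x_{ij}−x_i) − α_k/(x_{ik}−x_i) − (α_j−α_i)/(x_j−x_i) + (α_k−α_i)/(x_k−x_i) = 0, and the cross-ratio octahedron relation (x_{ik}−x_i)(x_{jk}−x_k)(x_{ij}−x_j) = (x_{ik}−x_k)(x_{jk}−x_j)(x_{ij}−x_i) both hold. Then the corner equation (E_j): α_k/(x_{jk}−x_j) − α_i/(x_{ij}−x_j) − (α_k−α_j)/(x_k−x_j)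 + (α_i−α_j)/(x_i−x_j) = 0 holds. -/
/-!
Both corner expressions are linear forms in `(α_i, α_j, α_k)`, and `(E_j)` is
`-(x_{ij} - x_i)(x_k - x_i) / ((x_{ij} - x_j)(x_k - x_j))` times `(E_i)`: for the coefficients of
`α_i` and `α_j` this is an identity of rational functions, and for the coefficient of `α_k`
it is exactly the octahedron relation.
-/

/-- The left-hand side of the corner equation at `x`, with neighbours `y`, `z`, face vertices
`xy`, `xz` and parameters `a`, `b`, `c` attached to `x`, `y`, `z`; `(E_j)` is `(E_i)` under the
cyclic relabelling `i → j → k → i`. -/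
def cornerForm {K : Type*} [Field K] (x y z xy xz a b c : K) : K :=
  b / (xy - x) - c / (xz - x) - (b - a) / (y - x) + (c - a) / (z - x)

theorem cornerForm_cyclic_eq_mul {K : Type*} [Field K] (xi xj xk xij xjk xik ai aj ak : K)
    (hij_i : xij - xi ≠ 0) (hik_i : xik - xi ≠ 0) (hj_i : xj - xi ≠ 0) (hk_i : xk - xi ≠ 0)
    (hjk_j : xjk - xj ≠ 0) (hij_j : xij - xj ≠ 0) (hk_j : xk - xj ≠ 0)
    (hOct : (xik - xi) * (xjk - xk) * (xij - xj) = (xik - xk) * (xjk - xj) * (xij - xi)) :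
    cornerForm xj xk xi xjk xij aj ak ai =
      -((xij - xi) * (xk - xi) / ((xij - xj) * (xk - xj))) *
        cornerForm xi xj xk xij xik ai aj ak := by
  have hi_j : xi - xj ≠ 0 := by rwa [← neg_sub, neg_ne_zero]
  unfold cornerForm
  field_simp
  linear_combination ak * (xi - xj) ^ 2 * hOct

theorem stmt6_general (xi xj xk xij xjk xik ai aj ak : ℝ)
    (h1 : xij - xi ≠ 0) (h2 : xik - xi ≠ 0) (h3 : xj - xi ≠ 0) (h4 : xk - xi ≠ 0)
    (h5 : xjk - xj ≠ 0) (h6 : xij - xj ≠ 0) (h7 : xk - xj ≠ 0)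
    (hEi : aj / (xij - xi) - ak / (xik - xi) - (aj - ai) / (xj - xi)
        + (ak - ai) / (xk - xi) = 0)
    (hOct : (xik - xi) * (xjk - xk) * (xij - xj) = (xik - xk) * (xjk - xj) * (xij - xi)) :
    ak / (xjk - xj) - ai / (xij - xj) - (ak - aj) / (xk - xj)
      + (ai - aj) / (xi - xj) = 0 := by
  have h := cornerForm_cyclic_eq_mul xi xj xk xij xjk xik ai aj ak h1 h2 h3 h4 h5 h6 h7 hOct
  unfold cornerForm at h
  rw [h, hEi, mul_zero]

theorem stmt6 (xi xj xk xij xjk xik ai aj ak : ℝ)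
    (h1 : xij - xi ≠ 0) (h2 : xik - xi ≠ 0) (h3 : xj - xi ≠ 0) (h4 : xk - xi ≠ 0)
    (h5 : xjk - xj ≠ 0) (h6 : xij - xj ≠ 0) (h7 : xk - xj ≠ 0) (h8 : xi - xj ≠ 0)
    (hEi : aj / (xij - xi) - ak / (xik - xi) - (aj - ai) / (xj - xi)
        + (ak - ai) / (xk - xi) = 0)
    (hOct : (xik - xi) * (xjk - xk) * (xij - xj) = (xik - xk) * (xjk - xj) * (xij - xi)) :
    ak / (xjk - xj) - ai / (xij - xj) - (ak - aj) / (xk - xj)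
      + (ai - aj) / (xi - xj) = 0 :=
  stmt6_general xi xj xk xij xjk xik ai aj ak h1 h2 h3 h4 h5 h6 h7 hEi hOct
end

section
/- Let X_i, X_j, X_k, X_{ij}, X_{jk}, X_{ik} be nonzero real numbers and α_i, α_j, α_k nonzero real parameters, with all factors appearing in denominators below nonzero. Suppose the corner equation (E_i): ((α_j X_i − X_{ij})/X_i) · ((α_i X_i − α_j X_j)/(α_j X_i − α_i X_j)) · (X_i/(α_k X_i − X_{ik})) · ((α_k X_i − α_i X_k)/(α_i X_i − α_k X_k)) = 1 holds, together with the octahedron relation (α_j X_{ij} − α_k X_{ik})/X_i + (α_k X_{jk} − α_i X_{ij})/X_j + (α_i X_{ik} − α_j X_{jk})/X_k = 0. Then the corner equation (E_j), obtained from (E_i) by the cyclic substitution (i,j,k) → (j,k,i), namely ((α_k X_j − X_{jk})/X_j) · ((α_j X_j − α_k X_k)/(α_k X_j − α_j X_k)) · (X_j/(α_i X_j − X_{ij})) · ((α_i X_j − α_j X_i)/(α_j X_j − α_i X_i)) = 1, also holds. -/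
/-!
Clearing denominators turns both corner equations into polynomial identities `Nᵢ = Dᵢ`,
`Nⱼ = Dⱼ`, and the octahedron relation into a cubic `O = 0`. The defects are tied by the
identity `Xᵢ² (Nⱼ - Dⱼ) = Xⱼ² (Nᵢ - Dᵢ) + Xᵢ Xⱼ (αᵢ Xⱼ - αⱼ Xᵢ) O`, so `(Eᵢ)` and the
octahedron relation force `(Eⱼ)` as soon as `Xᵢ ≠ 0`.
-/

section Field

variable {K : Type*} [Field K]

theorem div_mul_div_mul_div_mul_div_eq_one_iff {a b c d e f g h : K}
    (hb : b ≠ 0) (hd : d ≠ 0) (hf : f ≠ 0) (hh : h ≠ 0) :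
    a / b * (c / d) * (e / f) * (g / h) = 1 ↔ a * c * e * g = b * d * f * h := by
  rw [div_mul_div_comm, div_mul_div_comm, div_mul_div_comm,
    div_eq_one_iff_eq (by positivity)]

theorem div_add_div_add_div_eq_zero_iff {a b c d e f : K}
    (hb : b ≠ 0) (hd : d ≠ 0) (hf : f ≠ 0) :
    a / b + c / d + e / f = 0 ↔ (a * d + b * c) * f + b * d * e = 0 := by
  rw [div_add_div _ _ hb hd, div_add_div _ _ (mul_ne_zero hb hd) hf,
    div_eq_zero_iff, or_iff_left (by positivity)]

end Field

theorem corner_defect_cyclic_identity {R : Type*} [CommRing R]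
    (Xi Xj Xk Xij Xjk Xik ai aj ak : R) :
    Xi ^ 2 * ((ak * Xj - Xjk) * (aj * Xj - ak * Xk) * Xj * (ai * Xj - aj * Xi)
        - Xj * (ak * Xj - aj * Xk) * (ai * Xj - Xij) * (aj * Xj - ai * Xi))
      = Xj ^ 2 * ((aj * Xi - Xij) * (ai * Xi - aj * Xj) * Xi * (ak * Xi - ai * Xk)
          - Xi * (aj * Xi - ai * Xj) * (ak * Xi - Xik) * (ai * Xi - ak * Xk))
        + Xi * Xj * (ai * Xj - aj * Xi)
          * (((aj * Xij - ak * Xik) * Xj + Xi * (ak * Xjk - ai * Xij)) * Xk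
            + Xi * Xj * (ai * Xik - aj * Xjk)) := by
  ring

theorem stmt8_general (Xi Xj Xk Xij Xjk Xik ai aj ak : ℝ)
    (hXi : Xi ≠ 0) (hXj : Xj ≠ 0) (hXk : Xk ≠ 0)
    (d1 : aj * Xi - ai * Xj ≠ 0) (d2 : ak * Xi - Xik ≠ 0)
    (d3 : ai * Xi - ak * Xk ≠ 0)
    (d4 : ak * Xj - aj * Xk ≠ 0) (d5 : ai * Xj - Xij ≠ 0)
    (d6 : aj * Xj - ai * Xi ≠ 0)
    (hEi : ((aj * Xi - Xij) / Xi) * ((ai * Xi - aj * Xj) / (aj * Xi - ai * Xj))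
        * (Xi / (ak * Xi - Xik)) * ((ak * Xi - ai * Xk) / (ai * Xi - ak * Xk)) = 1)
    (hOct : (aj * Xij - ak * Xik) / Xi + (ak * Xjk - ai * Xij) / Xj
        + (ai * Xik - aj * Xjk) / Xk = 0) :
    ((ak * Xj - Xjk) / Xj) * ((aj * Xj - ak * Xk) / (ak * Xj - aj * Xk))
      * (Xj / (ai * Xj - Xij)) * ((ai * Xj - aj * Xi) / (aj * Xj - ai * Xi)) = 1 := by
  rw [div_mul_div_mul_div_mul_div_eq_one_iff hXi d1 d2 d3] at hEi
  rw [div_add_div_add_div_eq_zero_iff hXi hXj hXk] at hOct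
  rw [div_mul_div_mul_div_mul_div_eq_one_iff hXj d4 d5 d6, ← sub_eq_zero]
  have hdefect := corner_defect_cyclic_identity Xi Xj Xk Xij Xjk Xik ai aj ak
  rw [sub_eq_zero.mpr hEi, hOct, mul_zero, mul_zero, add_zero] at hdefect
  exact (mul_eq_zero.mp hdefect).resolve_left (pow_ne_zero 2 hXi)

theorem stmt8 (Xi Xj Xk Xij Xjk Xik ai aj ak : ℝ)
    (hXi : Xi ≠ 0) (hXj : Xj ≠ 0) (hXk : Xk ≠ 0)
    (hXij : Xij ≠ 0) (hXjk : Xjk ≠ 0) (hXik : Xik ≠ 0)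
    (hai : ai ≠ 0) (haj : aj ≠ 0) (hak : ak ≠ 0)
    (d1 : aj * Xi - ai * Xj ≠ 0) (d2 : ak * Xi - Xik ≠ 0)
    (d3 : ai * Xi - ak * Xk ≠ 0)
    (d4 : ak * Xj - aj * Xk ≠ 0) (d5 : ai * Xj - Xij ≠ 0)
    (d6 : aj * Xj - ai * Xi ≠ 0)
    (hEi : ((aj * Xi - Xij) / Xi) * ((ai * Xi - aj * Xj) / (aj * Xi - ai * Xj))
        * (Xi / (ak * Xi - Xik)) * ((ak * Xi - ai * Xk) / (ai * Xi - ak * Xk)) = 1)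
    (hOct : (aj * Xij - ak * Xik) / Xi + (ak * Xjk - ai * Xij) / Xj
        + (ai * Xik - aj * Xjk) / Xk = 0) :
    ((ak * Xj - Xjk) / Xj) * ((aj * Xj - ak * Xk) / (ak * Xj - aj * Xk))
      * (Xj / (ai * Xj - Xij)) * ((ai * Xj - aj * Xi) / (aj * Xj - ai * Xi)) = 1 :=
  stmt8_general Xi Xj Xk Xij Xjk Xik ai aj ak hXi hXj hXk d1 d2 d3 d4 d5 d6 hEi hOct
end

section
/- Let X_i, X_j, X_k, X_{ij}, X_{jk}, X_{ik} be nonzero real numbers and α_i, α_j, α_k nonzero real parameters such that the three corner equations of the form (E_i): ((α_j X_i − X_{ij})/X_i)·((α_i X_i − α_j X_j)/(α_j X_i − α_i X_j))·(X_i/(α_k X_i − X_{ik}))·((α_k X_i − α_i X_k)/(α_i X_i − α_k X_k)) = 1 hold at the vertices x_i, x_j, and x_k (the latter two obtained by cyclic substitutions (i,j,k)→(j,k,i) and (i,j,k)→(k,i,j)), with all appearing denominators nonzero. Then the product of the left-hand sides of the three equations equals 1 identically reduces, after cancellation of the Λ-legs, to the relation ((α_j X_i − X_{ij})(α_k X_j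 − X_{jk})(α_i X_k − X_{ik})) = ((α_k X_i − X_{ik})(α_i X_j − X_{ij})(α_j X_k − X_{jk})). -/
/-!
Each corner equation is a product of two `L`-legs and two `φ`-legs. The `φ`-leg is invariant
under exchanging the two vertices together with their parameters (the multiplicative form of the
antisymmetry `Λ(x,y;α,β) = -Λ(y,x;β,α)`), and every `φ`-leg occurs in the numerator of one corner
equation and in the denominator of another. In the product of the three corner equations the
`φ`-legs therefore cancel; in the remaining `L`-legs the factors `X_i, X_j, X_k` cancel as well.
-/

namespace CornerEquation

variable {K : Type*} [Field K]

/-- `exp (∂L(x,y;α)/∂x) = α - e^{y-x}` in the variables `X = e^x`, `Y = e^y`. -/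
def lLeg (α X Y : K) : K := (α * X - Y) / X

/-- `exp (∂Λ(x,y;α,β)/∂x)` in the variables `X = e^x`, `Y = e^y`. -/
def phiLeg (α β X Y : K) : K := (α * X - β * Y) / (β * X - α * Y)

/-- The left-hand side of the corner equation at the vertex `X` with parameter `α`, whose
neighbours `Y`, `Z` carry the parameters `β`, `γ`, and with `XY`, `XZ` the opposite corners. -/
def corner (α β γ X Y Z XY XZ : K) : K :=
  (β * X - XY) / X * ((α * X - β * Y) / (β * X - α * Y))
    * (X / (γ * X - XZ)) * ((γ * X - α * Z) / (α * X - γ * Z))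

theorem phiLeg_swap (α β X Y : K) : phiLeg β α Y X = phiLeg α β X Y := by
  rw [phiLeg, phiLeg, ← neg_div_neg_eq]
  ring

theorem corner_eq (α β γ X Y Z XY XZ : K) :
    corner α β γ X Y Z XY XZ
      = lLeg β X XY * phiLeg α β X Y * (lLeg γ X XZ)⁻¹ * (phiLeg α γ X Z)⁻¹ := by
  simp only [corner, lLeg, phiLeg, inv_div]

theorem lLeg_div_lLeg {X : K} (hX : X ≠ 0) (β γ Y Z : K) :
    lLeg β X Y / lLeg γ X Z = (β * X - Y) / (γ * X - Z) :=
  div_div_div_cancel_right₀ hX _ _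

theorem corner_mul_corner_mul_corner {αi αj αk Xi Xj Xk Xij Xjk Xik : K}
    (hij : phiLeg αi αj Xi Xj ≠ 0) (hjk : phiLeg αj αk Xj Xk ≠ 0)
    (hki : phiLeg αk αi Xk Xi ≠ 0) :
    corner αi αj αk Xi Xj Xk Xij Xik * corner αj αk αi Xj Xk Xi Xjk Xij
        * corner αk αi αj Xk Xi Xj Xik Xjk
      = lLeg αj Xi Xij / lLeg αk Xi Xik * (lLeg αk Xj Xjk / lLeg αi Xj Xij)
        * (lLeg αi Xk Xik / lLeg αj Xk Xjk) := by
  rw [corner_eq, corner_eq, corner_eq, phiLeg_swap αi αj, phiLeg_swap αk αi,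
    phiLeg_swap αj αk]
  field_simp

end CornerEquation

open CornerEquation in
theorem stmt14_general (Xi Xj Xk Xij Xjk Xik ai aj ak : ℝ)
    (hXi : Xi ≠ 0) (hXj : Xj ≠ 0) (hXk : Xk ≠ 0)
    (d1 : aj * Xi - ai * Xj ≠ 0) (d2 : ak * Xi - Xik ≠ 0)
    (d3 : ai * Xi - ak * Xk ≠ 0)
    (d4 : ak * Xj - aj * Xk ≠ 0) (d5 : ai * Xj - Xij ≠ 0)
    (d6 : aj * Xj - ai * Xi ≠ 0)
    (d7 : ai * Xk - ak * Xi ≠ 0) (d8 : aj * Xk - Xjk ≠ 0)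
    (d9 : ak * Xk - aj * Xj ≠ 0)
    (hEi : ((aj * Xi - Xij) / Xi) * ((ai * Xi - aj * Xj) / (aj * Xi - ai * Xj))
        * (Xi / (ak * Xi - Xik)) * ((ak * Xi - ai * Xk) / (ai * Xi - ak * Xk)) = 1)
    (hEj : ((ak * Xj - Xjk) / Xj) * ((aj * Xj - ak * Xk) / (ak * Xj - aj * Xk))
        * (Xj / (ai * Xj - Xij)) * ((ai * Xj - aj * Xi) / (aj * Xj - ai * Xi)) = 1)
    (hEk : ((ai * Xk - Xik) / Xk) * ((ak * Xk - ai * Xi) / (ai * Xk - ak * Xi))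
        * (Xk / (aj * Xk - Xjk)) * ((aj * Xk - ak * Xj) / (ak * Xk - aj * Xj)) = 1) :
    (aj * Xi - Xij) * (ak * Xj - Xjk) * (ai * Xk - Xik)
      = (ak * Xi - Xik) * (ai * Xj - Xij) * (aj * Xk - Xjk) := by
  have hprod : corner ai aj ak Xi Xj Xk Xij Xik * corner aj ak ai Xj Xk Xi Xjk Xij
      * corner ak ai aj Xk Xi Xj Xik Xjk = 1 := by
    unfold corner
    rw [hEi, hEj, hEk, mul_one, mul_one]
  rwa [corner_mul_corner_mul_corner (div_ne_zero (sub_ne_zero.2 (sub_ne_zero.1 d6).symm) d1)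
      (div_ne_zero (sub_ne_zero.2 (sub_ne_zero.1 d9).symm) d4)
      (div_ne_zero (sub_ne_zero.2 (sub_ne_zero.1 d3).symm) d7),
    lLeg_div_lLeg hXi, lLeg_div_lLeg hXj, lLeg_div_lLeg hXk, div_mul_div_comm,
    div_mul_div_comm, div_eq_one_iff_eq (mul_ne_zero (mul_ne_zero d2 d5) d8)] at hprod

theorem stmt14 (Xi Xj Xk Xij Xjk Xik ai aj ak : ℝ)
    (hXi : Xi ≠ 0) (hXj : Xj ≠ 0) (hXk : Xk ≠ 0)
    (hXij : Xij ≠ 0) (hXjk : Xjk ≠ 0) (hXik : Xik ≠ 0)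
    (hai : ai ≠ 0) (haj : aj ≠ 0) (hak : ak ≠ 0)
    (d1 : aj * Xi - ai * Xj ≠ 0) (d2 : ak * Xi - Xik ≠ 0)
    (d3 : ai * Xi - ak * Xk ≠ 0)
    (d4 : ak * Xj - aj * Xk ≠ 0) (d5 : ai * Xj - Xij ≠ 0)
    (d6 : aj * Xj - ai * Xi ≠ 0)
    (d7 : ai * Xk - ak * Xi ≠ 0) (d8 : aj * Xk - Xjk ≠ 0)
    (d9 : ak * Xk - aj * Xj ≠ 0)
    (hEi : ((aj * Xi - Xij) / Xi) * ((ai * Xi - aj * Xj) / (aj * Xi - ai * Xj))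
        * (Xi / (ak * Xi - Xik)) * ((ak * Xi - ai * Xk) / (ai * Xi - ak * Xk)) = 1)
    (hEj : ((ak * Xj - Xjk) / Xj) * ((aj * Xj - ak * Xk) / (ak * Xj - aj * Xk))
        * (Xj / (ai * Xj - Xij)) * ((ai * Xj - aj * Xi) / (aj * Xj - ai * Xi)) = 1)
    (hEk : ((ai * Xk - Xik) / Xk) * ((ak * Xk - ai * Xi) / (ai * Xk - ak * Xi))
        * (Xk / (aj * Xk - Xjk)) * ((aj * Xk - ak * Xj) / (ak * Xk - aj * Xj)) = 1) :
    (aj * Xi - Xij) * (ak * Xj - Xjk) * (ai * Xk - Xik)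
      = (ak * Xi - Xik) * (ai * Xj - Xij) * (aj * Xk - Xjk) :=
  stmt14_general Xi Xj Xk Xij Xjk Xik ai aj ak hXi hXj hXk d1 d2 d3 d4 d5 d6 d7 d8 d9 hEi hEj hEk
end
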